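/- Lévy's zero-one law: for every bounded below global variable f : Ω → ℝ̄ and every situation s, the event {ω ∈ Ω : liminf_{n→∞} E_V(f | ω^n) ≥ f(ω)} is strictly almost sure within Γ(s). -/

import Mathlib

open Filter Topology

noncomputable section

/-- Addition on the extended reals with the convention `(+∞) + (−∞) = (−∞) + (+∞) = +∞`. -/
def eadd (a b : EReal) : EReal := if a = ⊤ ∨ b = ⊤ then ⊤ else a + b

/-- An extended real variable is bounded below. -/
def BddBelowF {Y : Type*} (f : Y → EReal) : Prop := ∃ M : ℝ, ∀ y, (M : EReal) ≤ f y

/-- (E1): constants are preserved. -/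
def UE1 {Y : Type*} (E : (Y → EReal) → EReal) : Prop :=
  ∀ c : ℝ, E (fun _ => (c : EReal)) = (c : EReal)

/-- (E2): sub-additivity on bounded below variables. -/
def UE2 {Y : Type*} (E : (Y → EReal) → EReal) : Prop :=
  ∀ f g : Y → EReal, BddBelowF f → BddBelowF g →
    E (fun y => eadd (f y) (g y)) ≤ eadd (E f) (E g)

/-- (E3): positive homogeneity on bounded below variables. -/
def UE3 {Y : Type*} (E : (Y → EReal) → EReal) : Prop :=
  ∀ l : ℝ, 0 < l → ∀ f : Y → EReal, BddBelowF f →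
    E (fun y => (l : EReal) * f y) = (l : EReal) * E f

/-- (E4): monotonicity on bounded below variables. -/
def UE4 {Y : Type*} (E : (Y → EReal) → EReal) : Prop :=
  ∀ f g : Y → EReal, BddBelowF f → BddBelowF g → (∀ y, f y ≤ g y) → E f ≤ E g

/-- (E5): continuity with respect to non-decreasing sequences of non-negative variables. -/
def UE5 {Y : Type*} (E : (Y → EReal) → EReal) : Prop :=
  ∀ (fs : ℕ → Y → EReal) (f : Y → EReal),
    (∀ n y, 0 ≤ fs n y) → (∀ n y, fs n y ≤ fs (n + 1) y) →
    (∀ y, Tendsto (fun n => fs n y) atTop (𝓝 (f y))) →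
    Tendsto (fun n => E (fs n)) atTop (𝓝 (E f))

/-- An upper expectation: a map satisfying (E1)–(E5). -/
def IsUpperExpectation {Y : Type*} (E : (Y → EReal) → EReal) : Prop :=
  UE1 E ∧ UE2 E ∧ UE3 E ∧ UE4 E ∧ UE5 E

/-- The situation formed by the first `n` states of the path `ω`. -/
def pfx {X : Type*} (ω : ℕ → X) (n : ℕ) : List X := List.ofFn (fun i : Fin n => ω i)

/-- The cylinder event of all paths that go through the situation `s`. -/
def Gamma {X : Type*} (s : List X) : Set (ℕ → X) := {ω | pfx ω s.length = s}

/-- A process is bounded below. -/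
def BddBelowP {X : Type*} (M : List X → EReal) : Prop := ∃ B : ℝ, ∀ t, (B : EReal) ≤ M t

/-- A supermartingale for the imprecise probabilities tree `Q`. -/
def IsSupermartingale {X : Type*} (Q : List X → (X → EReal) → EReal)
    (M : List X → EReal) : Prop :=
  ∀ s : List X, Q s (fun x => M (s ++ [x])) ≤ M s

/-- The pathwise limit inferior of a process. -/
def liminfP {X : Type*} (M : List X → EReal) (ω : ℕ → X) : EReal :=
  Filter.liminf (fun n => M (pfx ω n)) atTop

/-- The game-theoretic upper expectation `E_V(f | s)`. -/
def upExp {X : Type*} (Q : List X → (X → EReal) → EReal)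
    (f : (ℕ → X) → EReal) (s : List X) : EReal :=
  sInf {x : EReal | ∃ M : List X → EReal, IsSupermartingale Q M ∧ BddBelowP M ∧
    (∀ ω ∈ Gamma s, f ω ≤ liminfP M ω) ∧ M s = x}

/-- An event `A` is strictly almost sure within `Γ(s)`: some `s`-test supermartingale
converges to `+∞` on every path of `Γ(s)` outside `A`. -/
def StrictlyAS {X : Type*} (Q : List X → (X → EReal) → EReal) (s : List X)
    (A : Set (ℕ → X)) : Prop :=
  ∃ T : List X → EReal, IsSupermartingale Q T ∧ (∀ t, 0 ≤ T t) ∧ T s = 1 ∧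
    ∀ ω ∈ Gamma s, ω ∉ A → Tendsto (fun n => T (pfx ω n)) atTop (𝓝 (⊤ : EReal))

/-- An `n`-measurable global variable only depends on the first `n` states. -/
def NMeasurable {X : Type*} (n : ℕ) (f : (ℕ → X) → EReal) : Prop :=
  ∀ ω ω' : ℕ → X, pfx ω n = pfx ω' n → f ω = f ω'

/-- A finitary global variable is `n`-measurable for some `n`. -/
def Finitary {X : Type*} (f : (ℕ → X) → EReal) : Prop := ∃ n : ℕ, NMeasurable n f

/-- The bounded below global variables that are pointwise limits of finitary variables. -/
def VbLim {X : Type*} : Set ((ℕ → X) → EReal) :=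
  {f | BddBelowF f ∧ ∃ gs : ℕ → (ℕ → X) → EReal, (∀ n, Finitary (gs n)) ∧
    ∀ ω, Tendsto (fun n => gs n ω) atTop (𝓝 (f ω))}


/-! For reals `C < a < b`, with `C` a lower bound of `f`, the paths along which `E_V(f | ω^n) < a`
infinitely often while `f ω > b` are beaten by a test supermartingale. Whenever `E_V(f | u) < a`,
some `M ∈ 𝕄_b` superhedges `f` from `u` with `M u < a`; betting half of the current capital on `M`,
with a stake chosen so that `M = a` is worth the whole capital, multiplies the capital by
`ρ = (1 + (b - C) / (a - C)) / 2 > 1` as soon as `M` reaches `b`. On a path with `f ω > b` this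
happens eventually since `liminf M ≥ f`, so restarting a round each time `E_V(f | ·)` drops below
`a` drives the capital to `+∞`. The invested half stays non-negative because
`M ≥ E_V(f | ·) ≥ C`: every supermartingale has a path from `u` along which it never exceeds its
value at `u`. Averaging the test supermartingales of all rational pairs `a < b` with weights
`2^-(i+1)`, which (E5) allows, gives a single one. -/

lemma eadd_eq_add {a b : EReal} (ha : a ≠ ⊥) (hb : b ≠ ⊥) : eadd a b = a + b := by
  unfold eadd
  split_ifs with h
  · rcases h with rfl | rfl
    · exact (EReal.top_add_of_ne_bot hb).symm
    · exact (EReal.add_top_of_ne_bot ha).symm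
  · rfl

lemma BddBelowF.ne_bot {Y : Type*} {g : Y → EReal} (hg : BddBelowF g) (y : Y) : g y ≠ ⊥ := by
  obtain ⟨M, hM⟩ := hg
  exact ne_bot_of_le_ne_bot (EReal.coe_ne_bot M) (hM y)

lemma bddBelowF_of_nonneg {Y : Type*} {g : Y → EReal} (hg : ∀ y, 0 ≤ g y) : BddBelowF g :=
  ⟨0, by simpa using hg⟩

namespace IsUpperExpectation

variable {Y : Type*} {E : (Y → EReal) → EReal} {g h : Y → EReal} (hE : IsUpperExpectation E)
include hE

lemma coe_le {r : ℝ} (hg : ∀ y, (r : EReal) ≤ g y) : (r : EReal) ≤ E g := by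
  simpa only [hE.1 r] using hE.2.2.2.1 _ g ⟨r, fun _ => le_rfl⟩ ⟨r, hg⟩ hg

lemma ne_bot (hg : BddBelowF g) : E g ≠ ⊥ := by
  obtain ⟨r, hr⟩ := hg
  exact ne_bot_of_le_ne_bot (EReal.coe_ne_bot r) (hE.coe_le hr)

lemma add_le (hg : BddBelowF g) (hh : BddBelowF h) : E (fun y => g y + h y) ≤ E g + E h := by
  simpa only [eadd_eq_add (hg.ne_bot _) (hh.ne_bot _), eadd_eq_add (hE.ne_bot hg) (hE.ne_bot hh)]
    using hE.2.1 g h hg hh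

lemma const_add_le (hg : BddBelowF g) (r : ℝ) : E (fun y => r + g y) ≤ r + E g := by
  simpa only [hE.1 r] using hE.add_le ⟨r, fun _ => le_rfl⟩ hg

lemma exists_le [Finite Y] [Nonempty Y] : ∃ y, g y ≤ E g := by
  obtain ⟨y₀, hy₀⟩ := Finite.exists_min g
  exact ⟨y₀, EReal.ge_of_forall_gt_iff_ge.mp fun z hz =>
    hE.coe_le fun y => hz.le.trans (hy₀ y)⟩

end IsUpperExpectation

section Paths

variable {X : Type*}

lemma pfx_succ (ω : ℕ → X) (n : ℕ) : pfx ω (n + 1) = pfx ω n ++ [ω n] := by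
  simp only [pfx]
  rw [List.ofFn_succ']
  simp [List.concat_eq_append]

lemma length_pfx (ω : ℕ → X) (n : ℕ) : (pfx ω n).length = n := by
  simp [pfx]

lemma pfx_prefix_pfx (ω : ℕ → X) {m n : ℕ} (h : m ≤ n) : pfx ω m <+: pfx ω n := by
  induction n, h using Nat.le_induction with
  | base => exact List.prefix_refl _
  | succ n _ ih => exact ih.trans (pfx_succ ω n ▸ List.prefix_append _ _)

lemma mem_Gamma_of_prefix_pfx {ω : ℕ → X} {t : List X} {n : ℕ} (h : t <+: pfx ω n) :
    ω ∈ Gamma t := by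
  have hlen : t.length ≤ n := by simpa [length_pfx] using h.length_le
  exact (List.prefix_of_prefix_length_le (pfx_prefix_pfx ω hlen) h
    (by simp [length_pfx])).eq_of_length (length_pfx ω _)

lemma prefix_pfx_of_mem_Gamma {ω : ℕ → X} {t : List X} (hω : ω ∈ Gamma t) {n : ℕ}
    (hn : t.length ≤ n) : t <+: pfx ω n := by
  have h := pfx_prefix_pfx ω hn
  rwa [show pfx ω t.length = t from hω] at h

lemma Gamma_anti {t u : List X} (h : t <+: u) : Gamma u ⊆ Gamma t :=
  fun _ hω => mem_Gamma_of_prefix_pfx (h.trans (prefix_pfx_of_mem_Gamma hω le_rfl))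

lemma exists_mem_Gamma_pfx_eq_iterate (c : List X → X) (u : List X) :
    ∃ ω ∈ Gamma u, ∀ k, pfx ω (u.length + k) = (fun t => t ++ [c t])^[k] u := by
  let ω : ℕ → X := fun i =>
    if h : i < u.length then u[i] else c ((fun t => t ++ [c t])^[i - u.length] u)
  have base : pfx ω u.length = u :=
    List.ext_getElem (length_pfx ω _) fun i hi _ => by simp [pfx, ω]
  refine ⟨ω, base, fun k => ?_⟩
  induction k with
  | zero => exact base
  | succ k ih =>
    rw [← add_assoc, pfx_succ, ih, Function.iterate_succ_apply']
    simp [ω]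

end Paths

section Supermartingales

variable {X : Type*} {Q : List X → (X → EReal) → EReal} (hQ : ∀ u, IsUpperExpectation (Q u))
include hQ

lemma isSupermartingale_const (c : ℝ) : IsSupermartingale Q fun _ => (c : EReal) :=
  fun u => ((hQ u).1 c).le

lemma IsSupermartingale.affine {M : List X → EReal} (hM : IsSupermartingale Q M)
    (hB : BddBelowP M) (α : ℝ) {c : ℝ} (hc : 0 < c) :
    IsSupermartingale Q fun u => (α : EReal) + (c : EReal) * M u := by
  obtain ⟨B, hB⟩ := hB
  intro u
  have hc' : (0 : EReal) ≤ c := by exact_mod_cast hc.le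
  have hcM : BddBelowF fun x => (c : EReal) * M (u ++ [x]) :=
    ⟨c * B, fun x => by rw [EReal.coe_mul]; exact mul_le_mul_of_nonneg_left (hB _) hc'⟩
  calc Q u (fun x => α + c * M (u ++ [x]))
      ≤ α + Q u (fun x => c * M (u ++ [x])) := (hQ u).const_add_le hcM α
    _ = α + c * Q u (fun x => M (u ++ [x])) := by
      rw [(hQ u).2.2.1 c hc _ ⟨B, fun x => hB _⟩]
    _ ≤ α + c * M u := add_le_add_right (mul_le_mul_of_nonneg_left (hM u) hc') _

lemma IsSupermartingale.const_mul {M : List X → EReal} (hM : IsSupermartingale Q M)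
    (hM0 : ∀ u, 0 ≤ M u) {c : ℝ} (hc : 0 < c) :
    IsSupermartingale Q fun u => (c : EReal) * M u := by
  simpa using hM.affine hQ ⟨0, by simpa using hM0⟩ 0 hc

lemma IsSupermartingale.add {M N : List X → EReal} (hM : IsSupermartingale Q M)
    (hN : IsSupermartingale Q N) (hM0 : ∀ u, 0 ≤ M u) (hN0 : ∀ u, 0 ≤ N u) :
    IsSupermartingale Q fun u => M u + N u := fun u =>
  ((hQ u).add_le (bddBelowF_of_nonneg fun _ => hM0 _) (bddBelowF_of_nonneg fun _ => hN0 _)).trans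
    (add_le_add (hM u) (hN u))

lemma isSupermartingale_iSup {M : ℕ → List X → EReal} (hM : ∀ N, IsSupermartingale Q (M N))
    (hM0 : ∀ N u, 0 ≤ M N u) (hmono : ∀ u, Monotone fun N => M N u) :
    IsSupermartingale Q fun u => ⨆ N, M N u := by
  intro u
  refine le_of_tendsto ((hQ u).2.2.2.2 (fun N x => M N (u ++ [x])) _ (fun N x => hM0 N _)
    (fun N x => hmono _ N.le_succ) (fun x => tendsto_atTop_iSup (hmono _))) ?_
  exact Eventually.of_forall fun N => (hM N u).trans (le_iSup (fun N => M N u) N)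

end Supermartingales

section Mixture

variable {X : Type*}

def mixture (w : ℕ → ℝ) (T : ℕ → List X → EReal) (u : List X) : EReal :=
  ⨆ N, ∑ i ∈ Finset.range N, (w i : EReal) * T i u

lemma EReal.coe_finset_sum {ι : Type*} (S : Finset ι) (g : ι → ℝ) :
    ((∑ i ∈ S, g i : ℝ) : EReal) = ∑ i ∈ S, (g i : EReal) := by
  classical
  induction S using Finset.induction_on with
  | empty => simp
  | insert i S hi ih => rw [Finset.sum_insert hi, Finset.sum_insert hi, EReal.coe_add, ih]

variable {w : ℕ → ℝ} {T : ℕ → List X → EReal} (hw : ∀ i, 0 < w i)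
  (hT0 : ∀ i u, 0 ≤ T i u)
include hw hT0

lemma mixture_summand_nonneg (i : ℕ) (u : List X) : 0 ≤ (w i : EReal) * T i u :=
  mul_nonneg (by exact_mod_cast (hw i).le) (hT0 i u)

lemma monotone_mixture_partialSum (u : List X) :
    Monotone fun N => ∑ i ∈ Finset.range N, (w i : EReal) * T i u := fun _ _ h =>
  Finset.sum_le_sum_of_subset_of_nonneg (Finset.range_mono h)
    fun i _ _ => mixture_summand_nonneg hw hT0 i u

lemma le_mixture (i : ℕ) (u : List X) : (w i : EReal) * T i u ≤ mixture w T u :=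
  (Finset.single_le_sum (fun j _ => mixture_summand_nonneg hw hT0 j u)
    (Finset.self_mem_range_succ i)).trans
    (le_iSup (fun N => ∑ j ∈ Finset.range N, (w j : EReal) * T j u) (i + 1))

lemma mixture_nonneg (u : List X) : 0 ≤ mixture w T u :=
  (mixture_summand_nonneg hw hT0 0 u).trans (le_mixture hw hT0 0 u)

lemma mixture_eq_one (hw1 : HasSum w 1) {u : List X} (hT1 : ∀ i, T i u = 1) :
    mixture w T u = 1 := by
  have hsum : ∀ N, ∑ i ∈ Finset.range N, (w i : EReal) * T i u =
      ((∑ i ∈ Finset.range N, w i : ℝ) : EReal) := fun N => by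
    simp only [hT1, mul_one, EReal.coe_finset_sum]
  have hmono := monotone_mixture_partialSum hw hT0 u
  simp only [hsum] at hmono
  rw [mixture, iSup_congr hsum, ← EReal.coe_one]
  exact tendsto_nhds_unique (tendsto_atTop_iSup hmono) (EReal.tendsto_coe.mpr hw1.tendsto_sum_nat)

lemma isSupermartingale_mixture {Q : List X → (X → EReal) → EReal}
    (hQ : ∀ u, IsUpperExpectation (Q u)) (hT : ∀ i, IsSupermartingale Q (T i)) :
    IsSupermartingale Q (mixture w T) := by
  refine isSupermartingale_iSup hQ (fun N => ?_)
    (fun N u => Finset.sum_nonneg fun i _ => mixture_summand_nonneg hw hT0 i u)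
    (monotone_mixture_partialSum hw hT0)
  induction N with
  | zero => simpa using isSupermartingale_const hQ 0
  | succ N ih =>
    simp only [Finset.sum_range_succ]
    exact ih.add hQ ((hT N).const_mul hQ (hT0 N) (hw N))
      (fun u => Finset.sum_nonneg fun i _ => mixture_summand_nonneg hw hT0 i u)
      (mixture_summand_nonneg hw hT0 N)

end Mixture

section StrictlyAlmostSure

variable {X : Type*} {Q : List X → (X → EReal) → EReal} {s : List X}

lemma StrictlyAS.mono {A B : Set (ℕ → X)} (h : StrictlyAS Q s A) (hAB : A ⊆ B) :
    StrictlyAS Q s B :=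
  let ⟨T, hT, hT0, hTs, hdiv⟩ := h
  ⟨T, hT, hT0, hTs, fun ω hω hB => hdiv ω hω fun hA => hB (hAB hA)⟩

variable (hQ : ∀ u, IsUpperExpectation (Q u))
include hQ

lemma strictlyAS_univ : StrictlyAS Q s Set.univ :=
  ⟨fun _ => ((1 : ℝ) : EReal), isSupermartingale_const hQ 1, fun _ => by simp, by simp,
    fun _ _ h => (h trivial).elim⟩

lemma strictlyAS_iInter_nat {A : ℕ → Set (ℕ → X)} (h : ∀ i, StrictlyAS Q s (A i)) :
    StrictlyAS Q s (⋂ i, A i) := by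
  choose T hT hT0 hTs hdiv using h
  have hw : ∀ i, (0 : ℝ) < 1 / 2 / 2 ^ i := fun i => by positivity
  refine ⟨mixture (fun i => 1 / 2 / 2 ^ i) T, isSupermartingale_mixture hw hT0 hQ hT,
    mixture_nonneg hw hT0, mixture_eq_one hw hT0 (hasSum_geometric_two' 1) hTs,
    fun ω hω hA => ?_⟩
  simp only [Set.mem_iInter, not_forall] at hA
  obtain ⟨i, hi⟩ := hA
  refine tendsto_nhds_top_mono ?_ (Eventually.of_forall fun n => le_mixture hw hT0 i (pfx ω n))
  simpa only [EReal.coe_mul_top_of_pos (hw i)] using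
    EReal.Tendsto.const_mul (a := ((1 / 2 / 2 ^ i : ℝ) : EReal)) (hdiv i ω hω hi)
      (.inl (EReal.coe_ne_bot _)) (.inl (EReal.coe_ne_top _))

lemma strictlyAS_iInter {ι : Type*} [Countable ι] {A : ι → Set (ℕ → X)}
    (h : ∀ i, StrictlyAS Q s (A i)) : StrictlyAS Q s (⋂ i, A i) := by
  cases isEmpty_or_nonempty ι
  · simpa using strictlyAS_univ hQ
  · obtain ⟨e, he⟩ := exists_surjective_nat ι
    rw [← he.iInter_comp]
    exact strictlyAS_iInter_nat hQ fun n => h (e n)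

end StrictlyAlmostSure

section UpperExpectation

variable {X : Type*} (Q : List X → (X → EReal) → EReal) (f : (ℕ → X) → EReal)

def Superhedges (t : List X) (M : List X → EReal) : Prop :=
  IsSupermartingale Q M ∧ BddBelowP M ∧ ∀ ω ∈ Gamma t, f ω ≤ liminfP M ω

variable {Q f}

lemma upExp_le_of_superhedges {t u : List X} {M : List X → EReal} (h : Superhedges Q f t M)
    (htu : t <+: u) : upExp Q f u ≤ M u :=
  sInf_le ⟨M, h.1, h.2.1, fun ω hω => h.2.2 ω (Gamma_anti htu hω), rfl⟩

lemma exists_superhedges_lt {t : List X} {x : EReal} (h : upExp Q f t < x) :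
    ∃ M, Superhedges Q f t M ∧ M t < x := by
  obtain ⟨_, ⟨M, hM, hB, hle, rfl⟩, hlt⟩ := sInf_lt_iff.mp h
  exact ⟨M, ⟨hM, hB, hle⟩, hlt⟩

variable [Finite X] [Nonempty X] (hQ : ∀ u, IsUpperExpectation (Q u))
include hQ

lemma IsSupermartingale.exists_liminfP_le {M : List X → EReal} (hM : IsSupermartingale Q M)
    (u : List X) : ∃ ω ∈ Gamma u, liminfP M ω ≤ M u := by
  have hchild : ∀ t, ∃ x, M (t ++ [x]) ≤ M t := fun t =>
    ((hQ t).exists_le).imp fun _ hx => hx.trans (hM t)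
  choose c hc using hchild
  obtain ⟨ω, hω, hpfx⟩ := exists_mem_Gamma_pfx_eq_iterate c u
  have hdesc : ∀ k, M ((fun t => t ++ [c t])^[k] u) ≤ M u := by
    intro k
    induction k with
    | zero => exact le_rfl
    | succ k ih => rw [Function.iterate_succ_apply']; exact (hc _).trans ih
  refine ⟨ω, hω, liminf_le_of_frequently_le' (Eventually.frequently ?_)⟩
  filter_upwards [eventually_ge_atTop u.length] with n hn
  obtain ⟨k, rfl⟩ := Nat.exists_eq_add_of_le hn
  rw [hpfx]
  exact hdesc k

variable {C : ℝ} (hC : ∀ ω, (C : EReal) ≤ f ω)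
include hC

lemma coe_le_upExp (u : List X) : (C : EReal) ≤ upExp Q f u := by
  refine le_sInf ?_
  rintro _ ⟨M, hM, -, hle, rfl⟩
  obtain ⟨ω, hω, hlim⟩ := hM.exists_liminfP_le hQ u
  exact (hC ω).trans ((hle ω hω).trans hlim)

lemma Superhedges.coe_le {t u : List X} {M : List X → EReal} (h : Superhedges Q f t M)
    (htu : t <+: u) : (C : EReal) ≤ M u :=
  (coe_le_upExp hQ hC u).trans (upExp_le_of_superhedges h htu)

end UpperExpectation

section Automaton

variable {X σ : Type*} (step : List X → σ → X → σ)

def runFrom : List X → σ → List X → σ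
  | _, st, [] => st
  | u, st, x :: v => runFrom (u ++ [x]) (step u st x) v

lemma runFrom_append_singleton (v u : List X) (st : σ) (x : X) :
    runFrom step u st (v ++ [x]) = step (u ++ v) (runFrom step u st v) x := by
  induction v generalizing u st with
  | nil => simp [runFrom]
  | cons y v ih => simp [runFrom, ih]

variable [DecidableEq X]

def stateFrom (init : σ) (s u : List X) : σ :=
  if s <+: u then runFrom step s init (u.drop s.length) else init

variable {step} {init : σ} {s u : List X}

lemma stateFrom_self : stateFrom step init s s = init := by
  simp [stateFrom, runFrom]

lemma stateFrom_of_not_prefix (h : ¬ s <+: u) : stateFrom step init s u = init := by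
  simp [stateFrom, h]

lemma stateFrom_append_singleton (h : s <+: u) (x : X) :
    stateFrom step init s (u ++ [x]) = step u (stateFrom step init s u) x := by
  obtain ⟨v, rfl⟩ := h
  simp [stateFrom, runFrom_append_singleton]

lemma stateFrom_append_singleton_of_not_prefix (h : ¬ s <+: u) (x : X) :
    stateFrom step init s (u ++ [x]) = init := by
  by_cases hx : s <+: u ++ [x]
  · rcases List.prefix_concat_iff.mp hx with rfl | hs
    · exact stateFrom_self
    · exact absurd hs h
  · exact stateFrom_of_not_prefix hx

end Automaton

section Rounds

variable {X : Type*} (Q : List X → (X → EReal) → EReal) (f : (ℕ → X) → EReal)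

def hedge (a : ℝ) (t : List X) : List X → EReal :=
  Classical.epsilon fun M => Superhedges Q f t M ∧ M t < a

/-- The round that governs the move out of `u`: the one in progress, or else a fresh one started
at `u` if `E_V(f | u) < a`. -/
def governingRound (a : ℝ) (u : List X) : Option (List X) → Option (List X)
  | some t => some t
  | none => if upExp Q f u < a then some u else none

/-- A state `(k, o)` records the number `k` of completed rounds and the starting situation of
the round in progress, if any; a round started at `t` is completed once `hedge t` reaches `b`. -/
def roundStep (a b : ℝ) (u : List X) (st : ℕ × Option (List X)) (x : X) :
    ℕ × Option (List X) :=
  match governingRound Q f a u st.2 with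
  | none => (st.1, none)
  | some t =>
    if (b : EReal) ≤ hedge Q f a t (u ++ [x]) then (st.1 + 1, none) else (st.1, some t)

def roundState [DecidableEq X] (a b : ℝ) (s : List X) : List X → ℕ × Option (List X) :=
  stateFrom (roundStep Q f a b) (0, none) s

def stake (C a : ℝ) : ℝ := (2 * (a - C))⁻¹

def gainFactor (C a b : ℝ) : ℝ := 1 / 2 + (b - C) * stake C a

/-- The capital `ρ^k (1/2 + (x - C) / (2 (a - C)))` during round `k` when the hedge is worth
`x`, written as an affine function of `x` so that `IsSupermartingale.affine` applies. -/
def betValue (C a b : ℝ) (k : ℕ) (x : EReal) : EReal :=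
  ((gainFactor C a b ^ k * (1 / 2 - C * stake C a) : ℝ) : EReal) +
    ((gainFactor C a b ^ k * stake C a : ℝ) : EReal) * x

def roundValue [DecidableEq X] (C a b : ℝ) (s u : List X) : EReal :=
  match roundState Q f a b s u with
  | (k, none) => ((gainFactor C a b ^ k : ℝ) : EReal)
  | (k, some t) => betValue C a b k (hedge Q f a t u)

variable {Q f}

lemma hedge_spec {a : ℝ} {t : List X} (h : upExp Q f t < a) :
    Superhedges Q f t (hedge Q f a t) ∧ hedge Q f a t t < a :=
  Classical.epsilon_spec (exists_superhedges_lt h)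

section Bets

variable {C a b : ℝ}

lemma betValue_coe (k : ℕ) (x : ℝ) :
    betValue C a b k x =
      ((gainFactor C a b ^ k * (1 / 2 + (x - C) * stake C a) : ℝ) : EReal) := by
  rw [betValue, ← EReal.coe_mul, ← EReal.coe_add]
  ring_nf

lemma betValue_floor (k : ℕ) :
    betValue C a b k C = ((gainFactor C a b ^ k / 2 : ℝ) : EReal) := by
  rw [betValue_coe]
  ring_nf

lemma betValue_target (k : ℕ) :
    betValue C a b k b = ((gainFactor C a b ^ (k + 1) : ℝ) : EReal) := by
  rw [betValue_coe, pow_succ, gainFactor]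

variable (hCa : C < a)
include hCa

lemma betValue_entry (k : ℕ) : betValue C a b k a = ((gainFactor C a b ^ k : ℝ) : EReal) := by
  have : (a - C) * stake C a = 1 / 2 := by
    simp only [stake]
    field_simp [(by linarith : a - C ≠ 0)]
  rw [betValue_coe, this]
  norm_num

lemma stake_pos : 0 < stake C a :=
  inv_pos.mpr (by linarith)

lemma one_lt_gainFactor (hab : a < b) : 1 < gainFactor C a b := by
  have : 1 / 2 < (b - C) * stake C a := by
    rw [stake, ← div_eq_mul_inv, lt_div_iff₀ (by linarith)]
    linarith
  unfold gainFactor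
  linarith

lemma pow_gainFactor_pos (hab : a < b) (k : ℕ) : 0 < gainFactor C a b ^ k :=
  pow_pos (zero_lt_one.trans (one_lt_gainFactor hCa hab)) k

lemma betValue_mono (hab : a < b) (k : ℕ) : Monotone (betValue C a b k) := fun _ _ h =>
  add_le_add_right (mul_le_mul_of_nonneg_left h (by
    exact_mod_cast (mul_pos (pow_gainFactor_pos hCa hab k) (stake_pos hCa)).le)) _

end Bets

variable {a b : ℝ} {s u t : List X}

lemma governingRound_eq_some {o : Option (List X)} (h : governingRound Q f a u o = some t) :
    o = some t ∨ (o = none ∧ t = u ∧ upExp Q f u < a) := by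
  cases o with
  | some t' => exact .inl h
  | none =>
    simp only [governingRound] at h
    split_ifs at h with hu
    cases h
    exact .inr ⟨rfl, rfl, hu⟩

lemma governingRound_eq_none {o : Option (List X)} (h : governingRound Q f a u o = none) :
    o = none := by
  cases o with
  | some t' => cases h
  | none => rfl

lemma governingRound_ne_none (h : upExp Q f u < a) (o : Option (List X)) :
    governingRound Q f a u o ≠ none := by
  cases o <;> simp [governingRound, h]

lemma prefix_of_governingRound {o : Option (List X)}
    (ho : ∀ t, o = some t → t <+: u ∧ upExp Q f t < a)
    (h : governingRound Q f a u o = some t) : t <+: u ∧ upExp Q f t < a := by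
  rcases governingRound_eq_some h with h' | ⟨-, rfl, hu⟩
  · exact ho t h'
  · exact ⟨List.prefix_refl _, hu⟩

lemma roundStep_of_governingRound_none {st : ℕ × Option (List X)}
    (h : governingRound Q f a u st.2 = none) (x : X) :
    roundStep Q f a b u st x = (st.1, none) := by
  simp [roundStep, h]

lemma roundStep_of_governingRound_some {st : ℕ × Option (List X)}
    (h : governingRound Q f a u st.2 = some t) (x : X) :
    roundStep Q f a b u st x = if (b : EReal) ≤ hedge Q f a t (u ++ [x])
      then (st.1 + 1, none) else (st.1, some t) := by
  simp [roundStep, h]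

lemma le_roundStep_fst (st : ℕ × Option (List X)) (x : X) :
    st.1 ≤ (roundStep Q f a b u st x).1 := by
  unfold roundStep
  split
  · exact le_rfl
  · split_ifs <;> simp

lemma roundStep_snd_of_fst_eq {st : ℕ × Option (List X)}
    (h : governingRound Q f a u st.2 = some t) {x : X}
    (hk : (roundStep Q f a b u st x).1 = st.1) : (roundStep Q f a b u st x).2 = some t := by
  rw [roundStep_of_governingRound_some h] at hk ⊢
  split_ifs at hk ⊢ with hb
  · simp at hk
  · rfl

variable [DecidableEq X]

lemma roundState_self : roundState Q f a b s s = (0, none) := stateFrom_self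

lemma roundState_append (hs : s <+: u) (x : X) :
    roundState Q f a b s (u ++ [x]) = roundStep Q f a b u (roundState Q f a b s u) x :=
  stateFrom_append_singleton hs x

lemma roundState_snd_eq_some (hs : s <+: u) (h : (roundState Q f a b s u).2 = some t) :
    t <+: u ∧ upExp Q f t < a ∧ hedge Q f a t u < b := by
  induction u using List.reverseRecOn generalizing t with
  | nil =>
    rw [List.prefix_nil.mp hs, roundState_self] at h
    cases h
  | append_singleton u x ih =>
    rcases List.prefix_concat_iff.mp hs with rfl | hs
    · rw [roundState_self] at h
      cases h
    rw [roundState_append hs] at h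
    cases hg : governingRound Q f a u (roundState Q f a b s u).2 with
    | none => rw [roundStep_of_governingRound_none hg] at h; cases h
    | some t' =>
      rw [roundStep_of_governingRound_some hg] at h
      split_ifs at h with hb
      cases h
      obtain ⟨htu, hta⟩ :=
        prefix_of_governingRound (fun t ht => (ih hs ht).imp_right And.left) hg
      exact ⟨htu.trans (List.prefix_append _ _), hta, not_le.mp hb⟩

lemma governingRound_roundState (hs : s <+: u)
    (h : governingRound Q f a u (roundState Q f a b s u).2 = some t) :
    t <+: u ∧ upExp Q f t < a :=
  prefix_of_governingRound (fun _ ht => (roundState_snd_eq_some hs ht).imp_right And.left) h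

lemma roundValue_of_idle {C : ℝ} {k : ℕ} (h : roundState Q f a b s u = (k, none)) :
    roundValue Q f C a b s u = ((gainFactor C a b ^ k : ℝ) : EReal) := by
  simp [roundValue, h]

lemma roundValue_of_active {C : ℝ} {k : ℕ} (h : roundState Q f a b s u = (k, some t)) :
    roundValue Q f C a b s u = betValue C a b k (hedge Q f a t u) := by
  simp [roundValue, h]

lemma roundValue_self {C : ℝ} : roundValue Q f C a b s s = 1 := by
  simp [roundValue_of_idle roundState_self]

lemma betValue_le_roundValue {C : ℝ} (hCa : C < a) (hab : a < b)
    (hg : governingRound Q f a u (roundState Q f a b s u).2 = some t) :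
    betValue C a b (roundState Q f a b s u).1 (hedge Q f a t u) ≤ roundValue Q f C a b s u := by
  rcases governingRound_eq_some hg with h | ⟨h, rfl, hu⟩
  · rw [roundValue_of_active (Prod.ext rfl h)]
  · rw [roundValue_of_idle (Prod.ext rfl h), ← betValue_entry hCa]
    exact betValue_mono hCa hab _ (hedge_spec hu).2.le

lemma roundValue_append_le {C : ℝ} (hCa : C < a) (hab : a < b) (hs : s <+: u)
    (hg : governingRound Q f a u (roundState Q f a b s u).2 = some t) (x : X) :
    roundValue Q f C a b s (u ++ [x]) ≤
      betValue C a b (roundState Q f a b s u).1 (hedge Q f a t (u ++ [x])) := by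
  have hst := roundState_append (Q := Q) (f := f) (a := a) (b := b) hs x
  rw [roundStep_of_governingRound_some hg] at hst
  split_ifs at hst with hb
  · rw [roundValue_of_idle hst, ← betValue_target]
    exact betValue_mono hCa hab _ hb
  · rw [roundValue_of_active hst]

section Path

variable {ω : ℕ → X} (hω : ω ∈ Gamma s)
include hω

lemma roundState_pfx_succ {n : ℕ} (hn : s.length ≤ n) :
    roundState Q f a b s (pfx ω (n + 1)) =
      roundStep Q f a b (pfx ω n) (roundState Q f a b s (pfx ω n)) (ω n) := by
  rw [pfx_succ]
  exact roundState_append (prefix_pfx_of_mem_Gamma hω hn) _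

lemma roundCount_mono {m n : ℕ} (hm : s.length ≤ m) (hmn : m ≤ n) :
    (roundState Q f a b s (pfx ω m)).1 ≤ (roundState Q f a b s (pfx ω n)).1 := by
  induction n, hmn using Nat.le_induction with
  | base => exact le_rfl
  | succ n hmn ih =>
    rw [roundState_pfx_succ hω (hm.trans hmn)]
    exact ih.trans (le_roundStep_fst _ _)

lemma exists_roundCount_lt (hbf : (b : EReal) < f ω) {n : ℕ} (hn : s.length ≤ n)
    (hg : governingRound Q f a (pfx ω n) (roundState Q f a b s (pfx ω n)).2 = some t) :
    ∃ m ≥ n, (roundState Q f a b s (pfx ω n)).1 < (roundState Q f a b s (pfx ω m)).1 := by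
  obtain ⟨htu, hta⟩ := governingRound_roundState (prefix_pfx_of_mem_Gamma hω hn) hg
  set k := (roundState Q f a b s (pfx ω n)).1
  -- Until another round is completed, round `t` stays in progress, so `hedge t < b` along `ω`.
  have hstay : ∀ m, n + 1 ≤ m → (roundState Q f a b s (pfx ω m)).1 = k →
      (roundState Q f a b s (pfx ω m)).2 = some t := by
    intro m hm
    induction m, hm using Nat.le_induction with
    | base =>
      rw [roundState_pfx_succ hω hn]
      exact roundStep_snd_of_fst_eq hg
    | succ m hm ih =>
      intro hk
      have hkm : (roundState Q f a b s (pfx ω m)).1 = k :=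
        le_antisymm (hk ▸ roundCount_mono hω (by omega) m.le_succ)
          (roundCount_mono hω hn (by omega))
      have hgm : governingRound Q f a (pfx ω m) (roundState Q f a b s (pfx ω m)).2 = some t := by
        rw [ih hkm]
        rfl
      rw [roundState_pfx_succ hω (by omega)] at hk ⊢
      exact roundStep_snd_of_fst_eq hgm (hk.trans hkm.symm)
  have hlim : (b : EReal) < liminfP (hedge Q f a t) ω :=
    hbf.trans_le ((hedge_spec hta).1.2.2 ω (mem_Gamma_of_prefix_pfx htu))
  obtain ⟨m, hbm, hm⟩ :=
    ((eventually_lt_of_lt_liminf hlim).and (eventually_ge_atTop (n + 1))).exists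
  refine ⟨m, by omega, lt_of_le_of_ne (roundCount_mono hω hn (by omega)) fun hk => ?_⟩
  exact lt_asymm hbm
    (roundState_snd_eq_some (prefix_pfx_of_mem_Gamma hω (by omega)) (hstay m hm hk.symm)).2.2

lemma tendsto_roundCount (hfreq : ∃ᶠ n in atTop, upExp Q f (pfx ω n) < a)
    (hbf : (b : EReal) < f ω) :
    Tendsto (fun n => (roundState Q f a b s (pfx ω n)).1) atTop atTop := by
  have hunbdd : ∀ K : ℕ, ∃ N ≥ s.length, K ≤ (roundState Q f a b s (pfx ω N)).1 := by
    intro K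
    induction K with
    | zero => exact ⟨s.length, le_rfl, Nat.zero_le _⟩
    | succ K ih =>
      obtain ⟨N, hN, hK⟩ := ih
      obtain ⟨j, hj, hja⟩ := frequently_atTop.mp hfreq N
      obtain ⟨t, ht⟩ := Option.ne_none_iff_exists'.mp (governingRound_ne_none hja _)
      obtain ⟨m, hm, hlt⟩ := exists_roundCount_lt hω hbf (hN.trans hj) ht
      exact ⟨m, by omega, hK.trans_lt ((roundCount_mono hω hN hj).trans_lt hlt)⟩
  refine tendsto_atTop_atTop.mpr fun K => ?_
  obtain ⟨N, hN, hK⟩ := hunbdd K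
  exact ⟨N, fun n hn => hK.trans (roundCount_mono hω hN hn)⟩

end Path

section Value

variable [Finite X] [Nonempty X] (hQ : ∀ u, IsUpperExpectation (Q u)) {C : ℝ}
  (hC : ∀ ω, (C : EReal) ≤ f ω) (hCa : C < a) (hab : a < b)
include hQ hC hCa hab

lemma half_pow_le_roundValue (u : List X) :
    ((gainFactor C a b ^ (roundState Q f a b s u).1 / 2 : ℝ) : EReal) ≤
      roundValue Q f C a b s u := by
  rcases hst : roundState Q f a b s u with ⟨k, _ | t⟩
  · rw [roundValue_of_idle hst]
    exact_mod_cast half_le_self (pow_gainFactor_pos hCa hab k).le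
  · have hs : s <+: u := by
      by_contra hs
      rw [roundState, stateFrom_of_not_prefix hs] at hst
      cases hst
    obtain ⟨htu, hta, -⟩ := roundState_snd_eq_some hs (by rw [hst])
    rw [roundValue_of_active hst, ← betValue_floor]
    exact betValue_mono hCa hab k ((hedge_spec hta).1.coe_le hQ hC htu)

lemma roundValue_nonneg (u : List X) : 0 ≤ roundValue Q f C a b s u :=
  le_trans (by exact_mod_cast (div_pos (pow_gainFactor_pos hCa hab _) two_pos).le)
    (half_pow_le_roundValue hQ hC hCa hab u)

lemma isSupermartingale_roundValue : IsSupermartingale Q (roundValue Q f C a b s) := by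
  intro u
  by_cases hs : s <+: u
  · set k := (roundState Q f a b s u).1
    cases hg : governingRound Q f a u (roundState Q f a b s u).2 with
    | none =>
      have hchild :
          ∀ x, roundValue Q f C a b s (u ++ [x]) = ((gainFactor C a b ^ k : ℝ) : EReal) :=
        fun x => roundValue_of_idle
          (by rw [roundState_append hs, roundStep_of_governingRound_none hg])
      rw [funext hchild, (hQ u).1, roundValue_of_idle (Prod.ext rfl (governingRound_eq_none hg))]
    | some t =>
      obtain ⟨htu, hta⟩ := governingRound_roundState hs hg
      have hsh := (hedge_spec hta).1
      have hbet : BddBelowF fun x => betValue C a b k (hedge Q f a t (u ++ [x])) :=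
        ⟨_, fun x => betValue_floor (b := b) k ▸
          betValue_mono hCa hab k (hsh.coe_le hQ hC (htu.trans (List.prefix_append _ _)))⟩
      calc Q u (fun x => roundValue Q f C a b s (u ++ [x]))
          ≤ Q u (fun x => betValue C a b k (hedge Q f a t (u ++ [x]))) :=
            (hQ u).2.2.2.1 _ _ (bddBelowF_of_nonneg fun x => roundValue_nonneg hQ hC hCa hab _)
              hbet (roundValue_append_le hCa hab hs hg)
        _ ≤ betValue C a b k (hedge Q f a t u) :=
            hsh.1.affine hQ hsh.2.1 _ (mul_pos (pow_gainFactor_pos hCa hab k) (stake_pos hCa)) u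
        _ ≤ roundValue Q f C a b s u := betValue_le_roundValue hCa hab hg
  · have hchild : ∀ x, roundValue Q f C a b s (u ++ [x]) = ((1 : ℝ) : EReal) := fun x => by
      simpa using roundValue_of_idle (C := C) (stateFrom_append_singleton_of_not_prefix hs x)
    rw [funext hchild, (hQ u).1]
    simpa using (roundValue_of_idle (C := C) (stateFrom_of_not_prefix hs)).ge

lemma tendsto_roundValue_top {ω : ℕ → X} (hω : ω ∈ Gamma s)
    (hfreq : ∃ᶠ n in atTop, upExp Q f (pfx ω n) < a) (hbf : (b : EReal) < f ω) :
    Tendsto (fun n => roundValue Q f C a b s (pfx ω n)) atTop (𝓝 ⊤) := by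
  refine tendsto_nhds_top_mono ?_
    (Eventually.of_forall fun n => half_pow_le_roundValue hQ hC hCa hab _)
  exact EReal.tendsto_coe_nhds_top_iff.mpr (((tendsto_pow_atTop_atTop_of_one_lt
    (one_lt_gainFactor hCa hab)).comp (tendsto_roundCount hω hfreq hbf)).atTop_div_const two_pos)

end Value

end Rounds

theorem strictlyAS_frequently_upExp_lt_imp_le {X : Type*} [Finite X] [Nonempty X]
    {Q : List X → (X → EReal) → EReal} (hQ : ∀ u, IsUpperExpectation (Q u))
    {f : (ℕ → X) → EReal} {C a b : ℝ} (hC : ∀ ω, (C : EReal) ≤ f ω) (hCa : C < a)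
    (hab : a < b) (s : List X) :
    StrictlyAS Q s {ω | (∃ᶠ n in atTop, upExp Q f (pfx ω n) < a) → f ω ≤ b} := by
  classical
  refine ⟨roundValue Q f C a b s, isSupermartingale_roundValue hQ hC hCa hab,
    roundValue_nonneg hQ hC hCa hab, roundValue_self, fun ω hω hA => ?_⟩
  obtain ⟨hfreq, hbf⟩ := Classical.not_imp.mp hA
  exact tendsto_roundValue_top hQ hC hCa hab hω hfreq (not_le.mp hbf)

/-- Lévy's zero-one law. For any bounded below global variable `f` and any
situation `s`, the event `{ω : liminf_n E_V(f|ω^n) ≥ f(ω)}` is strictly almost sure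
within `Γ(s)`. -/
theorem stmt10 {X : Type*} [Fintype X] [Nonempty X]
    (Q : List X → (X → EReal) → EReal) (hQ : ∀ s : List X, IsUpperExpectation (Q s))
    (f : (ℕ → X) → EReal) (hf : BddBelowF f) (s : List X) :
    StrictlyAS Q s
      {ω | f ω ≤ Filter.liminf (fun n => upExp Q f (pfx ω n)) atTop} := by
  obtain ⟨C, hC⟩ := hf
  refine (strictlyAS_iInter hQ fun p : {p : ℚ × ℚ // C < p.1 ∧ p.1 < p.2} =>
    strictlyAS_frequently_upExp_lt_imp_le (a := p.1.1) (b := p.1.2) hQ hC p.2.1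
      (by exact_mod_cast p.2.2) s).mono ?_
  intro ω hω
  simp only [Set.mem_iInter, Set.mem_ofPred_eq] at hω ⊢
  by_contra! hlt
  obtain ⟨q, hLq, hqf⟩ := EReal.exists_rat_btwn_of_lt hlt
  obtain ⟨r, hqr, hrf⟩ := EReal.exists_rat_btwn_of_lt hqf
  have hCL : (C : EReal) ≤ liminf (fun n => upExp Q f (pfx ω n)) atTop :=
    le_liminf_of_le (by isBoundedDefault) (Eventually.of_forall fun n => coe_le_upExp hQ hC _)
  have hCq : C < q := by exact_mod_cast hCL.trans_lt hLq
  exact (hω ⟨(q, r), hCq, by exact_mod_cast hqr⟩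
    (frequently_lt_of_liminf_lt (by isBoundedDefault) hLq)).not_gt hrf
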